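/- Let φ be an AND-OR formula with maximum fan-in l, ∧-depth d_∧, and ∨-depth d_∨, and let P_{G_φ} be its st-connectivity span program with unit edge weights. Then the maximum approximate positive witness size over all inputs satisfies W̃_+(P_{G_φ}) ≤ (1/2)·l^{d_∧}, and the maximum approximate negative witness size satisfies W̃_-(P_{G_φ}) ≤ 2·l^{d_∨}. -/

import Mathlib

open scoped ENNReal

namespace STConn

variable {V E : Type*}

/-- `v` is an endpoint of edge `e`. -/
def Touches (ends : E → V × V) (e : E) (v : V) : Prop :=
  (ends e).1 = v ∨ (ends e).2 = v

/-- Net flow out of vertex `v` for an edge-valued function `θ` (value along the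
fixed orientation of each edge). -/
noncomputable def netflow [Fintype E] [DecidableEq V] (ends : E → V × V) (θ : E → ℝ) (v : V) : ℝ :=
  ∑ e, θ e * ((if (ends e).1 = v then (1:ℝ) else 0) - (if (ends e).2 = v then 1 else 0))

/-- `θ` is a unit `st`-flow: net flow `+1` at `s`, `-1` at `t`, `0` elsewhere. -/
def IsUnitFlow [Fintype E] [DecidableEq V] (ends : E → V × V) (s t : V) (θ : E → ℝ) : Prop :=
  ∀ v, netflow ends θ v = (if v = s then (1:ℝ) else 0) - (if v = t then 1 else 0)

/-- Energy of a flow with respect to edge weights `c`. -/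
noncomputable def energy [Fintype E] (c : E → ℝ) (θ : E → ℝ) : ℝ :=
  ∑ e, θ e ^ 2 / c e

/-- Effective resistance between `s` and `t`, restricted to flows supported on `S`
(taking value `∞` if no unit `st`-flow supported on `S` exists). -/
noncomputable def effResOn [Fintype E] [DecidableEq V] (ends : E → V × V) (c : E → ℝ)
    (S : Set E) (s t : V) : ℝ≥0∞ :=
  ⨅ θ : {θ : E → ℝ // IsUnitFlow ends s t θ ∧ ∀ e ∉ S, θ e = 0},
    ENNReal.ofReal (energy c θ.1)

/-- Effective resistance between `s` and `t` in the network `(ends, c)`. -/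
noncomputable def effRes [Fintype E] [DecidableEq V] (ends : E → V × V) (c : E → ℝ)
    (s t : V) : ℝ≥0∞ :=
  effResOn ends c Set.univ s t

end STConn
namespace STConn

variable {V E : Type*}

/-- Endpoints of a directed edge: `(e, true)` is `e` with its fixed orientation,
`(e, false)` is the reversal. -/
def dend (ends : E → V × V) (p : E × Bool) : V × V :=
  if p.2 then ends p.1 else ((ends p.1).2, (ends p.1).1)

/-- The span program operator `A = ∑ √c(e) (|u⟩-|v⟩)⟨u,v,λ|` of the
`st`-connectivity span program `P_{G,c}`, applied to a vector `w` of the space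
`H` spanned by directed edges; the result lives in the vertex space `U`. -/
noncomputable def Amap [Fintype E] [DecidableEq V] (ends : E → V × V) (c : E → ℝ)
    (w : E × Bool → ℝ) : V → ℝ := fun v =>
  ∑ p : E × Bool, Real.sqrt (c p.1) * w p *
    ((if (dend ends p).1 = v then (1:ℝ) else 0) - (if (dend ends p).2 = v then 1 else 0))

/-- The target vector `τ = |s⟩ - |t⟩`. -/
def tau [DecidableEq V] (s t : V) : V → ℝ := fun v =>
  (if v = s then (1:ℝ) else 0) - (if v = t then 1 else 0)

/-- A unit `st`-flow presented as an antisymmetric function on directed edges. -/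
def IsUnitFlowD [Fintype E] [DecidableEq V] (ends : E → V × V) (s t : V)
    (θ : E × Bool → ℝ) : Prop :=
  (∀ p : E × Bool, θ (p.1, !p.2) = -θ p) ∧
  ∀ v, (∑ p : E × Bool, θ p * (if (dend ends p).1 = v then (1:ℝ) else 0)) = tau s t v

end STConn

namespace STConn

/-- Read-once AND-OR formulas on `N` variables (gates have fan-in `k+1`). -/
inductive Formula (N : ℕ) : Type where
  | var : Fin N → Formula N
  | and : (k : ℕ) → (Fin (k + 1) → Formula N) → Formula N
  | or : (k : ℕ) → (Fin (k + 1) → Formula N) → Formula N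

namespace Formula

variable {N : ℕ}

/-- Evaluation of a formula on an input. -/
def eval : Formula N → (Fin N → Bool) → Bool
  | .var i, x => x i
  | .and _ fs, x => (List.finRange _).all fun i => (fs i).eval x
  | .or _ fs, x => (List.finRange _).any fun i => (fs i).eval x

/-- The leaves of a formula; these index the edges of the graph `G_φ`. -/
def Leaves : Formula N → Type
  | .var _ => Unit
  | .and k fs => Σ i : Fin (k + 1), (fs i).Leaves
  | .or k fs => Σ i : Fin (k + 1), (fs i).Leaves

/-- The variable labelling a leaf. -/
def label : (φ : Formula N) → φ.Leaves → Fin N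
  | .var i, _ => i
  | .and _ fs, ⟨i, l⟩ => (fs i).label l
  | .or _ fs, ⟨i, l⟩ => (fs i).label l

/-- The internal (non-terminal) vertices of the series-parallel graph `G_φ`:
series composition (for `∧`) introduces `k` junction vertices. -/
def Inner : Formula N → Type
  | .var _ => Empty
  | .and k fs => (Σ i : Fin (k + 1), (fs i).Inner) ⊕ Fin k
  | .or k fs => Σ i : Fin (k + 1), (fs i).Inner

/-- The vertex set of `G_φ`: internal vertices plus the two terminals
(`Sum.inr true = s`, `Sum.inr false = t`). -/
abbrev Vert (φ : Formula N) : Type := φ.Inner ⊕ Bool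

/-- Embedding the vertices of the `i`-th subgraph into a series composition. -/
def vmapAnd (k : ℕ) (fs : Fin (k + 1) → Formula N) (i : Fin (k + 1)) :
    (fs i).Vert → (Formula.and k fs).Vert
  | .inl w => .inl (.inl ⟨i, w⟩)
  | .inr true =>
      if h : i.val = 0 then .inr true
      else .inl (.inr ⟨i.val - 1, by have := i.isLt; omega⟩)
  | .inr false =>
      if h : i.val = k then .inr false
      else .inl (.inr ⟨i.val, by have := i.isLt; omega⟩)

/-- Embedding the vertices of the `i`-th subgraph into a parallel composition. -/
def vmapOr (k : ℕ) (fs : Fin (k + 1) → Formula N) (i : Fin (k + 1)) :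
    (fs i).Vert → (Formula.or k fs).Vert
  | .inl w => .inl ⟨i, w⟩
  | .inr b => .inr b

/-- The endpoints of each edge (= leaf) of the series-parallel graph `G_φ`:
a variable is a single `st`-edge, `∧` composes the subgraphs in series, and
`∨` composes them in parallel. -/
def ends : (φ : Formula N) → φ.Leaves → φ.Vert × φ.Vert
  | .var _, _ => (.inr true, .inr false)
  | .and k fs, ⟨i, l⟩ =>
      (vmapAnd k fs i ((fs i).ends l).1, vmapAnd k fs i ((fs i).ends l).2)
  | .or k fs, ⟨i, l⟩ =>
      (vmapOr k fs i ((fs i).ends l).1, vmapOr k fs i ((fs i).ends l).2)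

/-- The dual formula: swap every `∧` with `∨`. -/
def dualF : Formula N → Formula N
  | .var i => .var i
  | .and k fs => .or k fun i => dualF (fs i)
  | .or k fs => .and k fun i => dualF (fs i)

def leavesFintype : (φ : Formula N) → Fintype φ.Leaves
  | .var _ => inferInstanceAs (Fintype Unit)
  | .and k fs =>
      letI := fun i => leavesFintype (fs i)
      inferInstanceAs (Fintype (Σ i : Fin (k + 1), (fs i).Leaves))
  | .or k fs =>
      letI := fun i => leavesFintype (fs i)
      inferInstanceAs (Fintype (Σ i : Fin (k + 1), (fs i).Leaves))

instance (φ : Formula N) : Fintype φ.Leaves := leavesFintype φ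

def innerDecEq : (φ : Formula N) → DecidableEq φ.Inner
  | .var _ => fun a => a.elim
  | .and k fs =>
      letI := fun i => innerDecEq (fs i)
      inferInstanceAs (DecidableEq ((Σ i : Fin (k + 1), (fs i).Inner) ⊕ Fin k))
  | .or k fs =>
      letI := fun i => innerDecEq (fs i)
      inferInstanceAs (DecidableEq (Σ i : Fin (k + 1), (fs i).Inner))

instance (φ : Formula N) : DecidableEq φ.Inner := innerDecEq φ

instance (φ : Formula N) : DecidableEq φ.Vert :=
  inferInstanceAs (DecidableEq (φ.Inner ⊕ Bool))

/-- The source terminal `s` of `G_φ`. -/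
def src (φ : Formula N) : φ.Vert := .inr true

/-- The sink terminal `t` of `G_φ`. -/
def snk (φ : Formula N) : φ.Vert := .inr false

end Formula
end STConn
namespace STConn
namespace Formula

variable {N : ℕ}

/-- The `∧`-depth: the largest number of `∧`-nodes on a root-to-leaf path. -/
def andDepth : Formula N → ℕ
  | .var _ => 0
  | .and _ fs => (Finset.univ.sup fun i => (fs i).andDepth) + 1
  | .or _ fs => Finset.univ.sup fun i => (fs i).andDepth

/-- The `∨`-depth: the largest number of `∨`-nodes on a root-to-leaf path. -/
def orDepth : Formula N → ℕ
  | .var _ => 0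
  | .and _ fs => Finset.univ.sup fun i => (fs i).orDepth
  | .or _ fs => (Finset.univ.sup fun i => (fs i).orDepth) + 1

/-- Every gate of the formula has fan-in at most `l`. -/
def FanInLe (l : ℕ) : Formula N → Prop
  | .var _ => True
  | .and k fs => k + 1 ≤ l ∧ ∀ i, FanInLe l (fs i)
  | .or k fs => k + 1 ≤ l ∧ ∀ i, FanInLe l (fs i)

end Formula
end STConn

namespace STConn
namespace Formula

variable {N : ℕ}

/-- The minimal positive error `e₊(x) = min {‖Π_{H(x)^⊥} w‖² : A w = τ}` for the
unit-weight `st`-connectivity span program on `G_φ`. -/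
noncomputable def apPosErr (φ : Formula N) (x : Fin N → Bool) : ℝ≥0∞ :=
  ⨅ w : {w : φ.Leaves × Bool → ℝ //
      Amap φ.ends (fun _ => (1 : ℝ)) w = tau φ.src φ.snk},
    ENNReal.ofReal (∑ p : φ.Leaves × Bool,
      if x (φ.label p.1) = false then (w.1 p) ^ 2 else 0)

/-- The approximate positive witness size `w̃₊(x)`: the minimal `‖w‖²` over
vectors `w` with `A w = τ` achieving the minimal error `e₊(x)`. -/
noncomputable def apPosSize (φ : Formula N) (x : Fin N → Bool) : ℝ≥0∞ :=
  ⨅ w : {w : φ.Leaves × Bool → ℝ //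
      Amap φ.ends (fun _ => (1 : ℝ)) w = tau φ.src φ.snk ∧
      ENNReal.ofReal (∑ p : φ.Leaves × Bool,
        if x (φ.label p.1) = false then (w p) ^ 2 else 0) = φ.apPosErr x},
    ENNReal.ofReal (∑ p : φ.Leaves × Bool, (w.1 p) ^ 2)

/-- The minimal negative error `e₋(x) = min {‖ωAΠ_{H(x)}‖² : ωτ = 1}` for the
unit-weight `st`-connectivity span program on `G_φ`. -/
noncomputable def apNegErr (φ : Formula N) (x : Fin N → Bool) : ℝ≥0∞ :=
  ⨅ ω : {ω : φ.Vert → ℝ // ω φ.src - ω φ.snk = 1},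
    ENNReal.ofReal (∑ p : φ.Leaves × Bool,
      if x (φ.label p.1) = true then
        (ω.1 (dend φ.ends p).1 - ω.1 (dend φ.ends p).2) ^ 2 else 0)

/-- The approximate negative witness size `w̃₋(x)`: the minimal `‖ωA‖²` over
functionals `ω` with `ωτ = 1` achieving the minimal error `e₋(x)`. -/
noncomputable def apNegSize (φ : Formula N) (x : Fin N → Bool) : ℝ≥0∞ :=
  ⨅ ω : {ω : φ.Vert → ℝ // ω φ.src - ω φ.snk = 1 ∧
      ENNReal.ofReal (∑ p : φ.Leaves × Bool,
        if x (φ.label p.1) = true then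
          (ω (dend φ.ends p).1 - ω (dend φ.ends p).2) ^ 2 else 0) = φ.apNegErr x},
    ENNReal.ofReal (∑ p : φ.Leaves × Bool,
      (ω.1 (dend φ.ends p).1 - ω.1 (dend φ.ends p).2) ^ 2)

end Formula
end STConn

/-!
For each input `x` we build, by induction on `φ`, a unit `st`-flow `θ` on `G_φ` and a potential
`ω` with `ω s = 1`, `ω t = 0` that satisfy Ohm's law in a degenerate electrical network: with
the `0`-edges deleted if `φ(x) = 1`, with the `1`-edges contracted if `φ(x) = 0`. Since
`∑ θ(e) dω(e) = ω s - ω t = 1` for every such pair, equality in Cauchy–Schwarz makes (the lift of)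
`θ` a positive and `ω` a negative witness of minimal error, whence `w̃₊(x) ≤ ‖θ‖² / 2` and
`w̃₋(x) ≤ 2 ‖dω‖²`. An `∧`-gate composes the children's pairs in series, adding at most `l` flow
energies and averaging the potential energies; an `∨`-gate composes them in parallel, which does
the reverse. By induction `‖θ‖² ≤ l ^ d_∧` and `‖dω‖² ≤ l ^ d_∨`.
-/

namespace STConn

open Finset

variable {ι V W E : Type*}

section Pairing

variable [Fintype V] [DecidableEq V]

theorem sum_mul_sub_eq_sum_incidence_mul [Fintype ι] (f : ι → ℝ) (g : ι → V × V)
    (ω : V → ℝ) :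
    ∑ i, f i * (ω (g i).1 - ω (g i).2) =
      ∑ v, (∑ i, f i * ((if (g i).1 = v then (1 : ℝ) else 0) -
        (if (g i).2 = v then 1 else 0))) * ω v := by
  simp only [Finset.sum_mul, mul_sub, sub_mul, mul_ite, ite_mul, mul_one, mul_zero, zero_mul]
  rw [Finset.sum_comm]
  simp [Finset.sum_sub_distrib]

theorem sum_tau_mul (s t : V) (ω : V → ℝ) : ∑ v, tau s t v * ω v = ω s - ω t := by
  simp [tau, sub_mul, Finset.sum_sub_distrib]

theorem IsUnitFlow.sum_mul_sub [Fintype E] {ends : E → V × V} {s t : V} {θ : E → ℝ}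
    (h : IsUnitFlow ends s t θ) (ω : V → ℝ) :
    ∑ e, θ e * (ω (ends e).1 - ω (ends e).2) = ω s - ω t := by
  rw [sum_mul_sub_eq_sum_incidence_mul, ← sum_tau_mul s t ω]
  exact Finset.sum_congr rfl fun v _ => congrArg (· * ω v) (h v)

theorem IsUnitFlow.map [Fintype E] [DecidableEq W] {ends : E → V × V} {s t : V} {θ : E → ℝ}
    (h : IsUnitFlow ends s t θ) (f : V → W) :
    IsUnitFlow (Prod.map f f ∘ ends) (f s) (f t) θ := fun w => by
  simpa [netflow, eq_comm] using h.sum_mul_sub (fun v => if f v = w then 1 else 0)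

theorem sum_mul_dend_sub_of_Amap_eq_tau [Fintype E] {ends : E → V × V} {c : E → ℝ}
    {w : E × Bool → ℝ} {s t : V} (h : Amap ends c w = tau s t) (ω : V → ℝ) :
    ∑ p, Real.sqrt (c p.1) * w p * (ω (dend ends p).1 - ω (dend ends p).2) = ω s - ω t := by
  rw [sum_mul_sub_eq_sum_incidence_mul, ← sum_tau_mul s t ω, ← h]
  rfl

end Pairing

section Lift

theorem sum_prod_bool {M : Type*} [AddCommMonoid M] [Fintype E] (f : E × Bool → M) :
    ∑ p, f p = ∑ e, (f (e, true) + f (e, false)) := by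
  rw [Fintype.sum_prod_type]
  exact Finset.sum_congr rfl fun e _ => Fintype.sum_bool _

/-- Every edge of `G` appears in `H` in both orientations, so the antisymmetric lift of a flow
carries half of it on each. -/
noncomputable def liftFlow (θ : E → ℝ) : E × Bool → ℝ :=
  fun p => if p.2 then θ p.1 / 2 else -(θ p.1 / 2)

theorem dend_sub (ends : E → V × V) (ω : V → ℝ) (p : E × Bool) :
    ω (dend ends p).1 - ω (dend ends p).2 =
      if p.2 then ω (ends p.1).1 - ω (ends p.1).2 else -(ω (ends p.1).1 - ω (ends p.1).2) := by
  rcases p with ⟨e, _ | _⟩ <;> simp [dend]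

theorem sum_liftFlow_sq [Fintype E] (θ : E → ℝ) :
    ∑ p, liftFlow θ p ^ 2 = (∑ e, θ e ^ 2) / 2 := by
  rw [sum_prod_bool, Finset.sum_div]
  exact Finset.sum_congr rfl fun e _ => by
    simp only [liftFlow, ↓reduceIte, Bool.false_eq_true]; ring

theorem sum_dend_sub_sq [Fintype E] (ends : E → V × V) (ω : V → ℝ) :
    ∑ p, (ω (dend ends p).1 - ω (dend ends p).2) ^ 2 =
      2 * ∑ e, (ω (ends e).1 - ω (ends e).2) ^ 2 := by
  rw [sum_prod_bool, Finset.mul_sum]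
  exact Finset.sum_congr rfl fun e _ => by
    simp only [dend_sub, ↓reduceIte, Bool.false_eq_true]; ring

variable [Fintype E] [DecidableEq V] {ends : E → V × V} {s t : V} {θ : E → ℝ}

theorem Amap_liftFlow (ends : E → V × V) (θ : E → ℝ) :
    Amap ends (fun _ => 1) (liftFlow θ) = netflow ends θ := by
  funext v
  rw [Amap, sum_prod_bool]
  refine Finset.sum_congr rfl fun e _ => ?_
  simp only [liftFlow, dend, Real.sqrt_one, ↓reduceIte, Bool.false_eq_true]
  ring

theorem IsUnitFlow.Amap_liftFlow (h : IsUnitFlow ends s t θ) :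
    Amap ends (fun _ => 1) (liftFlow θ) = tau s t :=
  (STConn.Amap_liftFlow ends θ).trans (funext h)

theorem IsUnitFlow.sum_liftFlow_mul_dend_sub [Fintype V] (h : IsUnitFlow ends s t θ)
    (ω : V → ℝ) :
    ∑ p, liftFlow θ p * (ω (dend ends p).1 - ω (dend ends p).2) = ω s - ω t := by
  rw [sum_prod_bool, ← h.sum_mul_sub ω]
  exact Finset.sum_congr rfl fun e _ => by
    simp only [liftFlow, dend_sub, ↓reduceIte, Bool.false_eq_true]; ring

end Lift

section Minimizers

/-- The equality case of Cauchy–Schwarz: on the hyperplane `∑ bᵢ a'ᵢ = 1`, `∑_{i ∈ S} a'ᵢ²` is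
minimal at the `a` to which `b` is proportional. -/
theorem sum_ite_sq_le_of_proportional [Fintype ι] (S : ι → Prop) [DecidablePred S]
    {a a' b : ι → ℝ} {c : ℝ} (hb : ∀ i, b i = if S i then c * a i else 0)
    (ha : ∑ i, b i * a i = 1) (ha' : ∑ i, b i * a' i = 1) :
    ∑ i, (if S i then a i ^ 2 else 0) ≤ ∑ i, if S i then a' i ^ 2 else 0 := by
  set A := ∑ i, if S i then a i ^ 2 else 0
  set A' := ∑ i, if S i then a' i ^ 2 else 0
  have hcA : c * A = 1 := by
    rw [← ha, Finset.mul_sum]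
    exact Finset.sum_congr rfl fun i _ => by rw [hb]; split_ifs <;> ring
  have hb2 : ∑ i, b i ^ 2 = c :=
    calc ∑ i, b i ^ 2 = c * (c * A) := by
          rw [Finset.mul_sum, Finset.mul_sum]
          exact Finset.sum_congr rfl fun i _ => by rw [hb]; split_ifs <;> ring
      _ = c := by rw [hcA, mul_one]
  have hba' : ∑ i, b i * (if S i then a' i else 0) = 1 := by
    rw [← ha']
    exact Finset.sum_congr rfl fun i _ => by rw [hb]; split_ifs <;> ring
  have hA' : ∑ i, (if S i then a' i else 0) ^ 2 = A' :=
    Finset.sum_congr rfl fun i _ => by split_ifs <;> ring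
  have hCS := Finset.sum_mul_sq_le_sq_mul_sq univ b fun i => if S i then a' i else 0
  rw [hba', hb2, hA', one_pow] at hCS
  have hA : 0 ≤ A := Finset.sum_nonneg fun i _ => by split_ifs <;> positivity
  nlinarith

noncomputable def minErrSize {α : Type*} (P : α → Prop) (err size : α → ℝ) : ENNReal :=
  ⨅ b : {b // P b ∧ ENNReal.ofReal (err b) = ⨅ c : {c // P c}, ENNReal.ofReal (err c.1)},
    ENNReal.ofReal (size b.1)

theorem minErrSize_le {α : Type*} {P : α → Prop} {err : α → ℝ} (size : α → ℝ) {a : α}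
    (ha : P a) (hmin : ∀ b, P b → err a ≤ err b) :
    minErrSize P err size ≤ ENNReal.ofReal (size a) := by
  have ha_min : ENNReal.ofReal (err a) = ⨅ c : {c // P c}, ENNReal.ofReal (err c.1) :=
    le_antisymm (le_iInf fun c => ENNReal.ofReal_le_ofReal (hmin c.1 c.2))
      (iInf_le (fun c : {c // P c} => ENNReal.ofReal (err c.1)) ⟨a, ha⟩)
  exact iInf_le_of_le ⟨a, ha, ha_min⟩ le_rfl

end Minimizers

section Weights

variable [Fintype ι]

theorem sum_le_mul_of_card_le {l : ℕ} (hl : Fintype.card ι ≤ l) {F : ι → ℝ} {B : ℝ}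
    (hB : 0 ≤ B) (hF : ∀ i, F i ≤ B) : ∑ i, F i ≤ l * B :=
  calc ∑ i, F i ≤ Fintype.card ι • B := Finset.sum_le_card_nsmul _ _ _ fun i _ => hF i
    _ = Fintype.card ι * B := nsmul_eq_mul _ _
    _ ≤ l * B := mul_le_mul_of_nonneg_right (by exact_mod_cast hl) hB

theorem sum_sq_mul_le_of_mem_stdSimplex {a F : ι → ℝ} {B : ℝ} (ha : a ∈ stdSimplex ℝ ι)
    (hF₀ : ∀ i, 0 ≤ F i) (hF : ∀ i, F i ≤ B) : ∑ i, a i ^ 2 * F i ≤ B := by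
  have ha₁ (i : ι) : a i ≤ 1 := ha.2 ▸ Finset.single_le_sum (fun j _ => ha.1 j) (mem_univ i)
  calc ∑ i, a i ^ 2 * F i ≤ ∑ i, a i * B := Finset.sum_le_sum fun i _ => by
        calc a i ^ 2 * F i ≤ a i * F i := by
              rw [sq, mul_assoc]
              exact mul_le_of_le_one_left (mul_nonneg (ha.1 i) (hF₀ i)) (ha₁ i)
          _ ≤ a i * B := mul_le_mul_of_nonneg_left (hF i) (ha.1 i)
    _ = B := by rw [← Finset.sum_mul, ha.2, one_mul]

theorem pow_le_pow_sup {l : ℕ} (hl : 1 ≤ l) (d : ι → ℕ) (i : ι) :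
    (l : ℝ) ^ d i ≤ (l : ℝ) ^ univ.sup d :=
  pow_le_pow_right₀ (by exact_mod_cast hl) (le_sup (mem_univ i))

theorem div_sum_mem_stdSimplex {R : ι → ℝ} (hR : ∀ i, 0 ≤ R i) (hpos : 0 < ∑ i, R i) :
    (fun i => R i / ∑ j, R j) ∈ stdSimplex ℝ ι :=
  ⟨fun i => div_nonneg (hR i) hpos.le, by rw [← Finset.sum_div, div_self hpos.ne']⟩

/-- Taking `a i ∝ (R i)⁻¹` on `S`, every `i ∈ S` gets the same share `a i * R i`. -/
theorem exists_mem_stdSimplex_mul_eq (S : ι → Prop) [DecidablePred S] {R : ι → ℝ}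
    (hR : ∀ i, S i → 0 < R i) (hS : ∃ i, S i) :
    ∃ a ∈ stdSimplex ℝ ι, ∀ i,
      if S i then a i * R i = ∑ j, a j ^ 2 * R j else a i = 0 := by
  set r : ι → ℝ := fun i => if S i then (R i)⁻¹ else 0
  have hr (i : ι) : 0 ≤ r i := by
    unfold r
    split_ifs with h
    exacts [inv_nonneg.2 (hR i h).le, le_rfl]
  obtain ⟨j, hj⟩ := hS
  have hpos : 0 < ∑ i, r i :=
    Finset.sum_pos' (fun i _ => hr i) ⟨j, mem_univ j, by simpa [r, hj] using hR j hj⟩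
  have hshare (i : ι) (h : S i) : r i / (∑ j, r j) * R i = (∑ j, r j)⁻¹ := by
    rw [div_mul_eq_mul_div, show r i = (R i)⁻¹ from if_pos h, inv_mul_cancel₀ (hR i h).ne',
      one_div]
  have hsum : ∑ i, (r i / ∑ j, r j) ^ 2 * R i = (∑ j, r j)⁻¹ :=
    calc _ = ∑ i, r i / (∑ j, r j) * (∑ j, r j)⁻¹ := Finset.sum_congr rfl fun i _ => by
          by_cases h : S i
          · rw [sq, mul_assoc, hshare i h]
          · simp [r, h]
      _ = _ := by rw [← Finset.sum_mul, ← Finset.sum_div, div_self hpos.ne', one_mul]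
  refine ⟨_, div_sum_mem_stdSimplex hr hpos, fun i => ?_⟩
  split_ifs with h
  · rw [hsum, hshare i h]
  · simp [r, h]

end Weights

namespace Formula

variable {N : ℕ}

@[reducible] def innerFintype : (φ : Formula N) → Fintype φ.Inner
  | .var _ => inferInstanceAs (Fintype Empty)
  | .and k fs =>
      letI := fun i => innerFintype (fs i)
      inferInstanceAs (Fintype ((Σ i : Fin (k + 1), (fs i).Inner) ⊕ Fin k))
  | .or k fs =>
      letI := fun i => innerFintype (fs i)
      inferInstanceAs (Fintype (Σ i : Fin (k + 1), (fs i).Inner))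

instance (φ : Formula N) : Fintype φ.Inner := innerFintype φ

instance (φ : Formula N) : Fintype φ.Vert := inferInstanceAs (Fintype (φ.Inner ⊕ Bool))

theorem apPosSize_eq (φ : Formula N) (x : Fin N → Bool) :
    φ.apPosSize x = minErrSize (fun w => Amap φ.ends (fun _ => 1) w = tau φ.src φ.snk)
      (fun w => ∑ p, if x (φ.label p.1) = false then w p ^ 2 else 0)
      (fun w => ∑ p, w p ^ 2) := rfl

theorem apNegSize_eq (φ : Formula N) (x : Fin N → Bool) :
    φ.apNegSize x = minErrSize (fun ω : φ.Vert → ℝ => ω φ.src - ω φ.snk = 1)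
      (fun ω => ∑ p, if x (φ.label p.1) = true then
        (ω (dend φ.ends p).1 - ω (dend φ.ends p).2) ^ 2 else 0)
      (fun ω => ∑ p, (ω (dend φ.ends p).1 - ω (dend φ.ends p).2) ^ 2) := rfl

theorem card_leaves_var (i : Fin N) : Fintype.card (Formula.var i).Leaves = 1 := rfl

section Composition

variable {k : ℕ} (fs : Fin (k + 1) → Formula N)

theorem sum_leaves_and {M : Type*} [AddCommMonoid M] (f : (Formula.and k fs).Leaves → M) :
    ∑ e, f e = ∑ i, ∑ e : (fs i).Leaves, f ⟨i, e⟩ := by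
  show ∑ e ∈ (univ : Finset (Σ i : Fin (k + 1), (fs i).Leaves)), f e = _
  rw [← Finset.univ_sigma_univ]
  exact Finset.sum_sigma _ _ _

theorem sum_leaves_or {M : Type*} [AddCommMonoid M] (f : (Formula.or k fs).Leaves → M) :
    ∑ e, f e = ∑ i, ∑ e : (fs i).Leaves, f ⟨i, e⟩ := by
  show ∑ e ∈ (univ : Finset (Σ i : Fin (k + 1), (fs i).Leaves)), f e = _
  rw [← Finset.univ_sigma_univ]
  exact Finset.sum_sigma _ _ _

theorem eval_and_eq_true (x : Fin N → Bool) :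
    (Formula.and k fs).eval x = true ↔ ∀ i, (fs i).eval x = true := by
  simp [eval]

theorem eval_or_eq_true (x : Fin N → Bool) :
    (Formula.or k fs).eval x = true ↔ ∃ i, (fs i).eval x = true := by
  simp [eval]

def tailSum (a : Fin (k + 1) → ℝ) (n : ℕ) : ℝ := ∑ j, if n ≤ j.val then a j else 0

theorem tailSum_zero (a : Fin (k + 1) → ℝ) : tailSum a 0 = ∑ j, a j := by
  simp [tailSum]

theorem tailSum_of_le (a : Fin (k + 1) → ℝ) {n : ℕ} (hn : k + 1 ≤ n) : tailSum a n = 0 :=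
  Finset.sum_eq_zero fun j _ => if_neg (by omega)

theorem tailSum_eq_add (a : Fin (k + 1) → ℝ) (i : Fin (k + 1)) :
    tailSum a i = a i + tailSum a (i + 1) := by
  rw [tailSum, tailSum, ← Fintype.sum_ite_eq i a, ← Finset.sum_add_distrib]
  refine Finset.sum_congr rfl fun j _ => ?_
  rcases eq_or_ne i j with rfl | hij
  · simp
  · have : (i : ℕ) ≠ j := Fin.val_ne_of_ne hij
    split_ifs <;> first | (exfalso; omega) | simp

/-- Child `i` of the series composition is scaled by `a i` and raised by the drops `a j` of the
children `j > i` that follow it on the way to `t`. -/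
def seriesPotential (a : Fin (k + 1) → ℝ) (ωs : ∀ i, (fs i).Vert → ℝ) :
    (Formula.and k fs).Vert → ℝ
  | .inl (.inl ⟨i, w⟩) => a i * ωs i (.inl w) + tailSum a (i + 1)
  | .inl (.inr j) => tailSum a (j + 1)
  | .inr true => 1
  | .inr false => 0

theorem seriesPotential_vmapAnd {a : Fin (k + 1) → ℝ} (ha : ∑ i, a i = 1)
    {ωs : ∀ i, (fs i).Vert → ℝ} (hs : ∀ i, ωs i (fs i).src = 1) (ht : ∀ i, ωs i (fs i).snk = 0)
    (i : Fin (k + 1)) (w : (fs i).Vert) :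
    seriesPotential fs a ωs (vmapAnd k fs i w) = a i * ωs i w + tailSum a (i + 1) := by
  rcases w with w | _ | _
  · rfl
  · rw [show ωs i (.inr false) = 0 from ht i, mul_zero, zero_add]
    by_cases h : (i : ℕ) = k
    · simp [vmapAnd, h, seriesPotential, tailSum_of_le]
    · simp [vmapAnd, h, seriesPotential]
  · rw [show ωs i (.inr true) = 1 from hs i, mul_one, ← tailSum_eq_add]
    by_cases h : (i : ℕ) = 0
    · simp [vmapAnd, h, seriesPotential, tailSum_zero, ha]
    · simp [vmapAnd, h, seriesPotential, Nat.sub_add_cancel (Nat.pos_of_ne_zero h)]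

/-- The vertices `s = spineVert 0, spineVert 1, …, spineVert (k + 1) = t` at which consecutive
children of the series composition are joined. -/
def spineVert (n : ℕ) : (Formula.and k fs).Vert :=
  if n = 0 then .inr true else if h : n - 1 < k then .inl (.inr ⟨n - 1, h⟩) else .inr false

theorem vmapAnd_src (i : Fin (k + 1)) : vmapAnd k fs i (fs i).src = spineVert fs i := by
  by_cases h : (i : ℕ) = 0
  · simp [vmapAnd, spineVert, src, h]
  · simp [vmapAnd, spineVert, src, h, show (i : ℕ) - 1 < k by omega]

theorem vmapAnd_snk (i : Fin (k + 1)) : vmapAnd k fs i (fs i).snk = spineVert fs (i + 1) := by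
  by_cases h : (i : ℕ) = k
  · simp [vmapAnd, spineVert, snk, h]
  · simp [vmapAnd, spineVert, snk, h, show (i : ℕ) < k by omega]

theorem isUnitFlow_series (θs : ∀ i, (fs i).Leaves → ℝ)
    (hθ : ∀ i, IsUnitFlow (fs i).ends (fs i).src (fs i).snk (θs i)) :
    IsUnitFlow (Formula.and k fs).ends (Formula.and k fs).src (Formula.and k fs).snk
      fun e => θs e.1 e.2 := fun v => by
  let f n : ℝ := if v = spineVert fs n then 1 else 0
  have hi (i : Fin (k + 1)) :
      netflow (Prod.map (vmapAnd k fs i) (vmapAnd k fs i) ∘ (fs i).ends) (θs i) v =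
        f i - f (i + 1) := by
    have h := (hθ i).map (vmapAnd k fs i) v
    rwa [vmapAnd_src, vmapAnd_snk] at h
  calc netflow (Formula.and k fs).ends (fun e => θs e.1 e.2) v
      = ∑ i : Fin (k + 1), (f i - f (i + 1)) := by
        rw [netflow, sum_leaves_and]
        exact Finset.sum_congr rfl fun i _ => hi i
    _ = f 0 - f (k + 1) := by
        rw [Fin.sum_univ_eq_sum_range (fun n => f n - f (n + 1)), Finset.sum_range_sub']
    _ = _ := by
        have h0 : spineVert fs 0 = (Formula.and k fs).src := rfl
        have hk : spineVert fs (k + 1) = (Formula.and k fs).snk := by simp [spineVert, snk]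
        simp only [f, h0, hk]

def parallelPotential (ωs : ∀ i, (fs i).Vert → ℝ) : (Formula.or k fs).Vert → ℝ
  | .inl ⟨i, w⟩ => ωs i (.inl w)
  | .inr true => 1
  | .inr false => 0

theorem parallelPotential_vmapOr {ωs : ∀ i, (fs i).Vert → ℝ} (hs : ∀ i, ωs i (fs i).src = 1)
    (ht : ∀ i, ωs i (fs i).snk = 0) (i : Fin (k + 1)) (w : (fs i).Vert) :
    parallelPotential fs ωs (vmapOr k fs i w) = ωs i w := by
  rcases w with w | _ | _
  · rfl
  · exact (ht i).symm
  · exact (hs i).symm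

theorem isUnitFlow_parallel {c : Fin (k + 1) → ℝ} (hc : ∑ i, c i = 1)
    (θs : ∀ i, (fs i).Leaves → ℝ) (hθ : ∀ i, IsUnitFlow (fs i).ends (fs i).src (fs i).snk (θs i)) :
    IsUnitFlow (Formula.or k fs).ends (Formula.or k fs).src (Formula.or k fs).snk
      fun e => c e.1 * θs e.1 e.2 := fun v => by
  have hi (i : Fin (k + 1)) :
      netflow (Prod.map (vmapOr k fs i) (vmapOr k fs i) ∘ (fs i).ends) (θs i) v =
        tau (Formula.or k fs).src (Formula.or k fs).snk v :=
    (hθ i).map _ v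
  calc netflow (Formula.or k fs).ends (fun e => c e.1 * θs e.1 e.2) v
      = ∑ i, c i * tau (Formula.or k fs).src (Formula.or k fs).snk v := by
        rw [netflow, sum_leaves_or]
        refine Finset.sum_congr rfl fun i _ => ?_
        rw [← hi, netflow, Finset.mul_sum]
        exact Finset.sum_congr rfl fun e _ => by simp only [mul_assoc]; rfl
    _ = _ := by rw [← Finset.sum_mul, hc, one_mul, tau]

end Composition

structure FlowPotential (φ : Formula N) where
  θ : φ.Leaves → ℝ
  ω : φ.Vert → ℝ
  isUnitFlow : IsUnitFlow φ.ends φ.src φ.snk θ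
  ω_src : ω φ.src = 1
  ω_snk : ω φ.snk = 0

namespace FlowPotential

section Basic

variable {φ : Formula N} (p : FlowPotential φ)

def drop (e : φ.Leaves) : ℝ := p.ω (φ.ends e).1 - p.ω (φ.ends e).2

noncomputable def flowEnergy : ℝ := ∑ e, p.θ e ^ 2

noncomputable def potentialEnergy : ℝ := ∑ e, p.drop e ^ 2

theorem ω_src_sub_ω_snk : p.ω φ.src - p.ω φ.snk = 1 := by rw [p.ω_src, p.ω_snk, sub_zero]

theorem sum_θ_mul_drop : ∑ e, p.θ e * p.drop e = 1 :=
  (p.isUnitFlow.sum_mul_sub p.ω).trans p.ω_src_sub_ω_snk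

theorem one_le_flowEnergy_mul_potentialEnergy : 1 ≤ p.flowEnergy * p.potentialEnergy := by
  have h := Finset.sum_mul_sq_le_sq_mul_sq univ p.θ p.drop
  rwa [p.sum_θ_mul_drop, one_pow] at h

theorem flowEnergy_nonneg : 0 ≤ p.flowEnergy := Finset.sum_nonneg fun _ _ => sq_nonneg _

theorem potentialEnergy_nonneg : 0 ≤ p.potentialEnergy :=
  Finset.sum_nonneg fun _ _ => sq_nonneg _

theorem flowEnergy_pos : 0 < p.flowEnergy :=
  pos_of_mul_pos_left (one_pos.trans_le p.one_le_flowEnergy_mul_potentialEnergy)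
    p.potentialEnergy_nonneg

theorem potentialEnergy_pos : 0 < p.potentialEnergy :=
  pos_of_mul_pos_right (one_pos.trans_le p.one_le_flowEnergy_mul_potentialEnergy)
    p.flowEnergy_nonneg

/-- Ohm's law in `G_φ` with the `0`-edges deleted and unit resistances: `θ` is the electrical
flow and `ω` the potential normalized to drop `1`. -/
def IsPosOhm (x : Fin N → Bool) : Prop :=
  ∀ e, p.θ e = if x (φ.label e) = true then p.flowEnergy * p.drop e else 0

/-- Ohm's law in `G_φ` with the `1`-edges contracted and unit resistances: `ω` is the
potential and `θ` the electrical flow normalized to value `1`. -/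
def IsNegOhm (x : Fin N → Bool) : Prop :=
  ∀ e, p.drop e = if x (φ.label e) = false then p.potentialEnergy * p.θ e else 0

structure IsWitness (l : ℕ) (x : Fin N → Bool) : Prop where
  flowEnergy_le : p.flowEnergy ≤ (l : ℝ) ^ φ.andDepth
  potentialEnergy_le : p.potentialEnergy ≤ (l : ℝ) ^ φ.orDepth
  isPosOhm : φ.eval x = true → p.IsPosOhm x
  isNegOhm : φ.eval x = false → p.IsNegOhm x

end Basic

section SpanProgram

variable {φ : Formula N} {p : FlowPotential φ} {x : Fin N → Bool}

theorem apPosSize_le_of_isPosOhm (h : p.IsPosOhm x) :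
    φ.apPosSize x ≤ ENNReal.ofReal (p.flowEnergy / 2) := by
  rw [apPosSize_eq, flowEnergy, ← sum_liftFlow_sq]
  refine minErrSize_le _ p.isUnitFlow.Amap_liftFlow fun w _ => ?_
  refine (Finset.sum_eq_zero fun q _ => ?_).trans_le
    (Finset.sum_nonneg fun q _ => by split_ifs <;> positivity)
  rcases q with ⟨e, b⟩
  by_cases hx : x (φ.label e) = false <;> simp [hx, liftFlow, h e]

theorem apNegSize_le_of_isNegOhm (h : p.IsNegOhm x) :
    φ.apNegSize x ≤ ENNReal.ofReal (2 * p.potentialEnergy) := by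
  rw [apNegSize_eq]
  simp only [potentialEnergy, drop, ← sum_dend_sub_sq]
  refine minErrSize_le _ p.ω_src_sub_ω_snk fun ω _ => ?_
  refine (Finset.sum_eq_zero fun q _ => ?_).trans_le
    (Finset.sum_nonneg fun q _ => by split_ifs <;> positivity)
  rcases q with ⟨e, b⟩
  have he := h e
  rw [drop] at he
  by_cases hx : x (φ.label e) = true <;> simp [hx, dend_sub, he]

theorem apNegSize_le_of_isPosOhm (h : p.IsPosOhm x) :
    φ.apNegSize x ≤ ENNReal.ofReal (2 * p.potentialEnergy) := by
  rw [apNegSize_eq]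
  simp only [potentialEnergy, drop, ← sum_dend_sub_sq]
  refine minErrSize_le _ p.ω_src_sub_ω_snk fun ω hω => ?_
  refine sum_ite_sq_le_of_proportional (fun q => x (φ.label q.1) = true) (b := liftFlow p.θ)
    (c := p.flowEnergy / 2) ?_ ?_ ?_
  · rintro ⟨e, b⟩
    have he := h e
    rw [drop] at he
    cases b <;> by_cases hx : x (φ.label e) = true <;> simp [liftFlow, dend_sub, hx, he] <;> ring
  · rw [p.isUnitFlow.sum_liftFlow_mul_dend_sub, p.ω_src_sub_ω_snk]
  · rw [p.isUnitFlow.sum_liftFlow_mul_dend_sub, hω]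

theorem apPosSize_le_of_isNegOhm (h : p.IsNegOhm x) :
    φ.apPosSize x ≤ ENNReal.ofReal (p.flowEnergy / 2) := by
  rw [apPosSize_eq, flowEnergy, ← sum_liftFlow_sq]
  refine minErrSize_le _ p.isUnitFlow.Amap_liftFlow fun w hw => ?_
  refine sum_ite_sq_le_of_proportional (fun q => x (φ.label q.1) = false)
    (b := fun q => p.ω (dend φ.ends q).1 - p.ω (dend φ.ends q).2)
    (c := 2 * p.potentialEnergy) ?_ ?_ ?_
  · rintro ⟨e, b⟩
    have he := h e
    rw [drop] at he
    cases b <;> by_cases hx : x (φ.label e) = false <;> simp [liftFlow, dend_sub, hx, he] <;> ring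
  · simp_rw [mul_comm _ (liftFlow _ _)]
    rw [p.isUnitFlow.sum_liftFlow_mul_dend_sub, p.ω_src_sub_ω_snk]
  · rw [← p.ω_src_sub_ω_snk, ← sum_mul_dend_sub_of_Amap_eq_tau hw p.ω]
    simp only [Real.sqrt_one, one_mul, mul_comm (w _)]

theorem IsWitness.apPosSize_le {l : ℕ} (hp : p.IsWitness l x) :
    φ.apPosSize x ≤ ENNReal.ofReal (p.flowEnergy / 2) := by
  cases hx : φ.eval x
  · exact apPosSize_le_of_isNegOhm (hp.isNegOhm hx)
  · exact apPosSize_le_of_isPosOhm (hp.isPosOhm hx)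

theorem IsWitness.apNegSize_le {l : ℕ} (hp : p.IsWitness l x) :
    φ.apNegSize x ≤ ENNReal.ofReal (2 * p.potentialEnergy) := by
  cases hx : φ.eval x
  · exact apNegSize_le_of_isNegOhm (hp.isNegOhm hx)
  · exact apNegSize_le_of_isPosOhm (hp.isPosOhm hx)

end SpanProgram

section Var

def ofVar (i : Fin N) : FlowPotential (Formula.var i) where
  θ _ := 1
  ω v := if v = (Formula.var i).src then 1 else 0
  isUnitFlow v := by
    rcases v with ⟨⟨⟩⟩ | _ | _ <;> simp [netflow, Formula.ends, src, snk, card_leaves_var]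
  ω_src := if_pos rfl
  ω_snk := if_neg (by simp [src, snk])

theorem drop_ofVar (i : Fin N) (e : (Formula.var i).Leaves) : (ofVar i).drop e = 1 := by
  simp [ofVar, drop, Formula.ends, src]

theorem flowEnergy_ofVar (i : Fin N) : (ofVar i).flowEnergy = 1 := by
  simp [flowEnergy, ofVar, card_leaves_var]

theorem potentialEnergy_ofVar (i : Fin N) : (ofVar i).potentialEnergy = 1 := by
  simp [potentialEnergy, drop_ofVar, card_leaves_var]

theorem isWitness_ofVar {l : ℕ} {x : Fin N → Bool} (i : Fin N) : (ofVar i).IsWitness l x where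
  flowEnergy_le := by simp [flowEnergy_ofVar, andDepth]
  potentialEnergy_le := by simp [potentialEnergy_ofVar, orDepth]
  isPosOhm hx e := by
    rw [flowEnergy_ofVar, drop_ofVar, one_mul]
    exact (if_pos hx).symm
  isNegOhm hx e := by
    rw [potentialEnergy_ofVar, drop_ofVar, one_mul]
    exact (if_pos hx).symm

end Var

section Composition

variable {k : ℕ} {fs : Fin (k + 1) → Formula N}

def series (p : ∀ i, FlowPotential (fs i)) (a : Fin (k + 1) → ℝ) :
    FlowPotential (Formula.and k fs) where
  θ e := (p e.1).θ e.2
  ω := seriesPotential fs a fun i => (p i).ω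
  isUnitFlow := isUnitFlow_series fs _ fun i => (p i).isUnitFlow
  ω_src := rfl
  ω_snk := rfl

def parallel (p : ∀ i, FlowPotential (fs i)) {c : Fin (k + 1) → ℝ} (hc : ∑ i, c i = 1) :
    FlowPotential (Formula.or k fs) where
  θ e := c e.1 * (p e.1).θ e.2
  ω := parallelPotential fs fun i => (p i).ω
  isUnitFlow := isUnitFlow_parallel fs hc _ fun i => (p i).isUnitFlow
  ω_src := rfl
  ω_snk := rfl

variable (p : ∀ i, FlowPotential (fs i))

theorem drop_series {a : Fin (k + 1) → ℝ} (ha : ∑ i, a i = 1) (i : Fin (k + 1))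
    (e : (fs i).Leaves) : (series p a).drop ⟨i, e⟩ = a i * (p i).drop e := by
  simp only [drop, series]
  rw [show (Formula.and k fs).ends ⟨i, e⟩ =
    (vmapAnd k fs i ((fs i).ends e).1, vmapAnd k fs i ((fs i).ends e).2) from rfl,
    seriesPotential_vmapAnd fs ha (fun i => (p i).ω_src) (fun i => (p i).ω_snk),
    seriesPotential_vmapAnd fs ha (fun i => (p i).ω_src) (fun i => (p i).ω_snk)]
  ring

theorem drop_parallel {c : Fin (k + 1) → ℝ} (hc : ∑ i, c i = 1) (i : Fin (k + 1))
    (e : (fs i).Leaves) : (parallel p hc).drop ⟨i, e⟩ = (p i).drop e := by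
  simp only [drop, parallel]
  rw [show (Formula.or k fs).ends ⟨i, e⟩ =
    (vmapOr k fs i ((fs i).ends e).1, vmapOr k fs i ((fs i).ends e).2) from rfl,
    parallelPotential_vmapOr fs (fun i => (p i).ω_src) (fun i => (p i).ω_snk),
    parallelPotential_vmapOr fs (fun i => (p i).ω_src) (fun i => (p i).ω_snk)]

theorem flowEnergy_series (a : Fin (k + 1) → ℝ) :
    (series p a).flowEnergy = ∑ i, (p i).flowEnergy :=
  sum_leaves_and fs _

theorem potentialEnergy_series {a : Fin (k + 1) → ℝ} (ha : ∑ i, a i = 1) :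
    (series p a).potentialEnergy = ∑ i, a i ^ 2 * (p i).potentialEnergy := by
  rw [potentialEnergy, sum_leaves_and]
  refine Finset.sum_congr rfl fun i _ => ?_
  simp only [drop_series p ha, mul_pow, potentialEnergy, Finset.mul_sum]

theorem flowEnergy_parallel {c : Fin (k + 1) → ℝ} (hc : ∑ i, c i = 1) :
    (parallel p hc).flowEnergy = ∑ i, c i ^ 2 * (p i).flowEnergy := by
  rw [flowEnergy, sum_leaves_or]
  refine Finset.sum_congr rfl fun i _ => ?_
  simp only [parallel, mul_pow, flowEnergy, Finset.mul_sum]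

theorem potentialEnergy_parallel {c : Fin (k + 1) → ℝ} (hc : ∑ i, c i = 1) :
    (parallel p hc).potentialEnergy = ∑ i, (p i).potentialEnergy := by
  rw [potentialEnergy, sum_leaves_or]
  simp only [drop_parallel p hc, potentialEnergy]

variable {x : Fin N → Bool}

theorem isPosOhm_series (hp : ∀ i, (p i).IsPosOhm x) {a : Fin (k + 1) → ℝ} (ha : ∑ i, a i = 1)
    (hE : ∀ i, a i * ∑ j, (p j).flowEnergy = (p i).flowEnergy) : (series p a).IsPosOhm x := by
  rintro ⟨i, e⟩
  rw [flowEnergy_series, drop_series p ha]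
  show (p i).θ e = if x ((fs i).label e) = true then _ else 0
  rw [hp i e, ← hE i]
  split_ifs <;> ring

theorem isNegOhm_series (hpos : ∀ i, (fs i).eval x = true → (p i).IsPosOhm x)
    (hneg : ∀ i, (fs i).eval x = false → (p i).IsNegOhm x) {a : Fin (k + 1) → ℝ}
    (ha : ∑ i, a i = 1)
    (hw : ∀ i, if (fs i).eval x = false then
      a i * (p i).potentialEnergy = ∑ j, a j ^ 2 * (p j).potentialEnergy else a i = 0) :
    (series p a).IsNegOhm x := by
  rintro ⟨i, e⟩
  rw [potentialEnergy_series p ha, drop_series p ha]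
  show _ = if x ((fs i).label e) = false then _ * (p i).θ e else 0
  have hwi := hw i
  cases hi : (fs i).eval x
  · rw [if_pos hi] at hwi
    rw [hneg i hi e, ← hwi]
    split_ifs <;> ring
  · rw [if_neg (by simp [hi])] at hwi
    rw [hwi, zero_mul, hpos i hi e]
    cases x ((fs i).label e) <;> simp

theorem isPosOhm_parallel (hpos : ∀ i, (fs i).eval x = true → (p i).IsPosOhm x)
    (hneg : ∀ i, (fs i).eval x = false → (p i).IsNegOhm x) {c : Fin (k + 1) → ℝ}
    (hc : ∑ i, c i = 1)
    (hw : ∀ i, if (fs i).eval x = true then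
      c i * (p i).flowEnergy = ∑ j, c j ^ 2 * (p j).flowEnergy else c i = 0) :
    (parallel p hc).IsPosOhm x := by
  rintro ⟨i, e⟩
  rw [flowEnergy_parallel p hc, drop_parallel p hc]
  show c i * (p i).θ e = if x ((fs i).label e) = true then _ * (p i).drop e else 0
  have hwi := hw i
  cases hi : (fs i).eval x
  · rw [if_neg (by simp [hi])] at hwi
    rw [hwi, zero_mul, hneg i hi e]
    cases x ((fs i).label e) <;> simp
  · rw [if_pos hi] at hwi
    rw [hpos i hi e, ← hwi]
    split_ifs <;> ring

theorem isNegOhm_parallel (hp : ∀ i, (p i).IsNegOhm x) {c : Fin (k + 1) → ℝ}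
    (hc : ∑ i, c i = 1) (hD : ∀ i, c i * ∑ j, (p j).potentialEnergy = (p i).potentialEnergy) :
    (parallel p hc).IsNegOhm x := by
  rintro ⟨i, e⟩
  rw [potentialEnergy_parallel, drop_parallel p hc]
  show _ = if x ((fs i).label e) = false then _ * (c i * (p i).θ e) else 0
  rw [hp i e, ← hD i]
  split_ifs <;> ring

variable {l : ℕ}

theorem flowEnergy_series_le (hkl : k + 1 ≤ l) (a : Fin (k + 1) → ℝ)
    (hp : ∀ i, (p i).flowEnergy ≤ (l : ℝ) ^ (fs i).andDepth) :
    (series p a).flowEnergy ≤ (l : ℝ) ^ (Formula.and k fs).andDepth := by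
  rw [flowEnergy_series, andDepth, pow_succ, mul_comm]
  exact sum_le_mul_of_card_le (by simpa using hkl) (by positivity)
    fun i => (hp i).trans (pow_le_pow_sup (by omega : 1 ≤ l) (fun i => (fs i).andDepth) i)

theorem potentialEnergy_series_le (hl : 1 ≤ l) {a : Fin (k + 1) → ℝ}
    (ha : a ∈ stdSimplex ℝ (Fin (k + 1)))
    (hp : ∀ i, (p i).potentialEnergy ≤ (l : ℝ) ^ (fs i).orDepth) :
    (series p a).potentialEnergy ≤ (l : ℝ) ^ (Formula.and k fs).orDepth := by
  rw [potentialEnergy_series p ha.2, orDepth]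
  exact sum_sq_mul_le_of_mem_stdSimplex ha (fun i => (p i).potentialEnergy_nonneg)
    fun i => (hp i).trans (pow_le_pow_sup hl (fun i => (fs i).orDepth) i)

theorem flowEnergy_parallel_le (hl : 1 ≤ l) {c : Fin (k + 1) → ℝ}
    (hc : c ∈ stdSimplex ℝ (Fin (k + 1)))
    (hp : ∀ i, (p i).flowEnergy ≤ (l : ℝ) ^ (fs i).andDepth) :
    (parallel p hc.2).flowEnergy ≤ (l : ℝ) ^ (Formula.or k fs).andDepth := by
  rw [flowEnergy_parallel, andDepth]
  exact sum_sq_mul_le_of_mem_stdSimplex hc (fun i => (p i).flowEnergy_nonneg)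
    fun i => (hp i).trans (pow_le_pow_sup hl (fun i => (fs i).andDepth) i)

theorem potentialEnergy_parallel_le (hkl : k + 1 ≤ l) {c : Fin (k + 1) → ℝ}
    (hc : ∑ i, c i = 1) (hp : ∀ i, (p i).potentialEnergy ≤ (l : ℝ) ^ (fs i).orDepth) :
    (parallel p hc).potentialEnergy ≤ (l : ℝ) ^ (Formula.or k fs).orDepth := by
  rw [potentialEnergy_parallel, orDepth, pow_succ, mul_comm]
  exact sum_le_mul_of_card_le (by simpa using hkl) (by positivity)
    fun i => (hp i).trans (pow_le_pow_sup (by omega : 1 ≤ l) (fun i => (fs i).orDepth) i)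

theorem exists_isWitness_and (hkl : k + 1 ≤ l) (hp : ∀ i, (p i).IsWitness l x) :
    ∃ q : FlowPotential (Formula.and k fs), q.IsWitness l x := by
  have hl : 1 ≤ l := by omega
  by_cases hx : (Formula.and k fs).eval x = true
  · have hall := (eval_and_eq_true fs x).1 hx
    have hE : 0 < ∑ i, (p i).flowEnergy := sum_pos (fun i _ => (p i).flowEnergy_pos) univ_nonempty
    have ha := div_sum_mem_stdSimplex (fun i => (p i).flowEnergy_nonneg) hE
    exact ⟨series p _, flowEnergy_series_le p hkl _ fun i => (hp i).flowEnergy_le,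
      potentialEnergy_series_le p hl ha fun i => (hp i).potentialEnergy_le,
      fun _ => isPosOhm_series p (fun i => (hp i).isPosOhm (hall i)) ha.2
        fun i => div_mul_cancel₀ _ hE.ne',
      fun h => absurd hx (by simp [h])⟩
  · obtain ⟨j, hj⟩ : ∃ j, (fs j).eval x = false := by simpa [eval_and_eq_true] using hx
    obtain ⟨a, ha, hw⟩ := exists_mem_stdSimplex_mul_eq (fun i => (fs i).eval x = false)
      (fun i _ => (p i).potentialEnergy_pos) ⟨j, hj⟩
    exact ⟨series p a, flowEnergy_series_le p hkl _ fun i => (hp i).flowEnergy_le,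
      potentialEnergy_series_le p hl ha fun i => (hp i).potentialEnergy_le,
      fun h => absurd h hx,
      fun _ => isNegOhm_series p (fun i => (hp i).isPosOhm) (fun i => (hp i).isNegOhm) ha.2 hw⟩

theorem exists_isWitness_or (hkl : k + 1 ≤ l) (hp : ∀ i, (p i).IsWitness l x) :
    ∃ q : FlowPotential (Formula.or k fs), q.IsWitness l x := by
  have hl : 1 ≤ l := by omega
  by_cases hx : (Formula.or k fs).eval x = true
  · obtain ⟨j, hj⟩ := (eval_or_eq_true fs x).1 hx
    obtain ⟨c, hc, hw⟩ := exists_mem_stdSimplex_mul_eq (fun i => (fs i).eval x = true)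
      (fun i _ => (p i).flowEnergy_pos) ⟨j, hj⟩
    exact ⟨parallel p hc.2, flowEnergy_parallel_le p hl hc fun i => (hp i).flowEnergy_le,
      potentialEnergy_parallel_le p hkl _ fun i => (hp i).potentialEnergy_le,
      fun _ => isPosOhm_parallel p (fun i => (hp i).isPosOhm) (fun i => (hp i).isNegOhm) hc.2 hw,
      fun h => absurd hx (by simp [h])⟩
  · have hall : ∀ i, (fs i).eval x = false := by simpa [eval_or_eq_true] using hx
    have hD : 0 < ∑ i, (p i).potentialEnergy :=
      sum_pos (fun i _ => (p i).potentialEnergy_pos) univ_nonempty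
    have hc := div_sum_mem_stdSimplex (fun i => (p i).potentialEnergy_nonneg) hD
    exact ⟨parallel p hc.2, flowEnergy_parallel_le p hl hc fun i => (hp i).flowEnergy_le,
      potentialEnergy_parallel_le p hkl _ fun i => (hp i).potentialEnergy_le,
      fun h => absurd h hx,
      fun _ => isNegOhm_parallel p (fun i => (hp i).isNegOhm (hall i)) hc.2
        fun i => div_mul_cancel₀ _ hD.ne'⟩

end Composition

end FlowPotential

theorem exists_isWitness {l : ℕ} (φ : Formula N) (hφ : FanInLe l φ) (x : Fin N → Bool) :
    ∃ p : FlowPotential φ, p.IsWitness l x := by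
  induction φ with
  | var i => exact ⟨_, FlowPotential.isWitness_ofVar i⟩
  | and k fs ih =>
    choose p hp using fun i => ih i (hφ.2 i)
    exact FlowPotential.exists_isWitness_and p hφ.1 hp
  | or k fs ih =>
    choose p hp using fun i => ih i (hφ.2 i)
    exact FlowPotential.exists_isWitness_or p hφ.1 hp

end Formula
end STConn

open scoped ENNReal in
open STConn Formula in
/-- For an AND-OR formula `φ` with fan-in at most `l`, `∧`-depth `d_∧` and
`∨`-depth `d_∨`, the unit-weight `st`-connectivity span program `P_{G_φ}`
satisfies `W̃₊(P_{G_φ}) ≤ (1/2)·l^{d_∧}` and `W̃₋(P_{G_φ}) ≤ 2·l^{d_∨}`. -/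
theorem stmt_18 {N : ℕ} (φ : Formula N) (l : ℕ) (hl : FanInLe l φ) :
    (⨆ x : Fin N → Bool, φ.apPosSize x) ≤ (l : ℝ≥0∞) ^ φ.andDepth / 2 ∧
    (⨆ x : Fin N → Bool, φ.apNegSize x) ≤ 2 * (l : ℝ≥0∞) ^ φ.orDepth := by
  constructor <;> refine iSup_le fun x => ?_ <;> obtain ⟨p, hp⟩ := exists_isWitness φ hl x
  · calc φ.apPosSize x ≤ ENNReal.ofReal (p.flowEnergy / 2) := hp.apPosSize_le
      _ ≤ ENNReal.ofReal ((l : ℝ) ^ φ.andDepth / 2) :=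
        ENNReal.ofReal_le_ofReal (by linarith [hp.flowEnergy_le])
      _ = (l : ℝ≥0∞) ^ φ.andDepth / 2 := by
        rw [ENNReal.ofReal_div_of_pos two_pos, ENNReal.ofReal_pow (Nat.cast_nonneg l),
          ENNReal.ofReal_natCast, ENNReal.ofReal_ofNat]
  · calc φ.apNegSize x ≤ ENNReal.ofReal (2 * p.potentialEnergy) := hp.apNegSize_le
      _ ≤ ENNReal.ofReal (2 * (l : ℝ) ^ φ.orDepth) :=
        ENNReal.ofReal_le_ofReal (by linarith [hp.potentialEnergy_le])
      _ = 2 * (l : ℝ≥0∞) ^ φ.orDepth := by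
        rw [ENNReal.ofReal_mul zero_le_two, ENNReal.ofReal_pow (Nat.cast_nonneg l),
          ENNReal.ofReal_natCast, ENNReal.ofReal_ofNat]
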